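/- Let D ∈ C³(ℝ) and r ∈ C⁴(ℝ) be 1-periodic functions with D positive, both even (D(−x) = D(x), r(−x) = r(x)) and both monotonic on [0, 1/2]. Assume r'(x) ≠ 0 for all x ∈ (0, 1/2), r''(0) ≠ 0 and r''(1/2) ≠ 0. Suppose that for every q ∈ ℝ we are given a principal eigenpair (k(q), ψ_q) of L_q^0[r;D]. Then q ↦ k(q) is monotonic: if D and r have the same monotonicity on [0, 1/2] (both nonincreasing or both nondecreasing), then k is nonincreasing in q; if D and r have opposite monotonicity on [0, 1/2], then k is nondecreasing in q. -/

import Mathlib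

open Real MeasureTheory Set Filter Topology

noncomputable section

/-- The operator `L_q^λ[r;D]` acting on C² functions `ψ`:
`(L_q^λ[r;D]ψ)(x) = D ψ'' + ((1+q)D' − 2λD) ψ' + (qD'' + λ²D − (1+q)λD' + r) ψ`. -/
def Lop (q lam : ℝ) (r D ψ : ℝ → ℝ) (x : ℝ) : ℝ :=
  D x * deriv (deriv ψ) x + ((1 + q) * deriv D x - 2 * lam * D x) * deriv ψ x +
    (q * deriv (deriv D) x + lam ^ 2 * D x - (1 + q) * lam * deriv D x + r x) * ψ x

/-- `(k, ψ)` is a principal eigenpair of `L_q^λ[r;D]`: `ψ` is a positive, 1-periodic,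
C² function with `L_q^λ[r;D]ψ = kψ`. -/
def IsEigenpair (q lam : ℝ) (r D : ℝ → ℝ) (k : ℝ) (ψ : ℝ → ℝ) : Prop :=
  ContDiff ℝ 2 ψ ∧ (∀ x, 0 < ψ x) ∧ Function.Periodic ψ 1 ∧
    ∀ x, Lop q lam r D ψ x = k * ψ x

/-- The Freidlin–Gärtner infimum `inf_{λ>0} k(λ)/λ`, as an extended real number. -/
def speed (k : ℝ → ℝ) : EReal := ⨅ l : {l : ℝ // 0 < l}, ((k l.1 / l.1 : ℝ) : EReal)

/-!
For `λ = 0` the operator is in divergence form, `L_q^0 ψ = F_q' + r ψ` with the flux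
`F_q = D ψ' + q D' ψ`. Since `D` and `r` are even, `x ↦ ψ_q (-x)` is again a principal
eigenfunction, so by uniqueness (Wronskian) `ψ_q` is even; then `F_q` is odd and 1-periodic and
vanishes at `0` and `1/2`. As `F_q' = (k(q) - r) ψ_q` with `k(q) - r` monotone on `[0, 1/2]`,
`F_q` has the sign of `r'` there, and `D' F_q` has the sign of `D' r'` everywhere.

For `q₁ < q₂` and `c = (q₁ + q₂) / 2`, writing `Fᵢ = F_{qᵢ}` and `ψᵢ = ψ_{qᵢ}`, the function
`D^c (F₁ ψ₂ - F₂ ψ₁)` is periodic; integrating its derivative over a period gives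
`(k(q₁) - k(q₂)) ∫ D^c ψ₁ ψ₂ = (q₂ - q₁) / 2 ∫ D^(c-1) D' (F₁ ψ₂ + F₂ ψ₁)`,
so the sign of `k(q₁) - k(q₂)` is that of `D' r'`.
-/

open Function

namespace Function

variable {f : ℝ → ℝ}

lemma Even.deriv (hf : f.Even) : (deriv f).Odd := fun x => by
  have h := deriv_comp_neg f x
  rw [show (fun x => f (-x)) = f from funext hf] at h
  linarith

lemma Odd.deriv (hf : f.Odd) : (deriv f).Even := fun x => by
  have h := deriv_comp_neg f x
  rw [show (fun x => f (-x)) = -f from funext hf, deriv.neg] at h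
  linarith

lemma Periodic.deriv {c : ℝ} (hf : Periodic f c) : Periodic (deriv f) c := fun x => by
  simpa only [show (fun x => f (x + c)) = f from funext hf] using
    (deriv_comp_add_const f c x).symm

lemma Odd.map_half_eq_zero (hf : f.Odd) (hp : Periodic f 1) : f (1 / 2) = 0 := by
  have h := hp (-(1 / 2))
  rw [hf, show -(1 / 2) + 1 = (1 / 2 : ℝ) by norm_num] at h
  linarith

lemma Even.exists_mem_Icc_eq {α : Type*} {g : ℝ → α} (hg : g.Even) (hp : Periodic g 1) (x : ℝ) :
    ∃ y ∈ Icc (0 : ℝ) (1 / 2), g y = g x := by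
  refine ⟨|x - round x|, ⟨abs_nonneg _, abs_sub_round x⟩, ?_⟩
  have hshift : g (x - round x) = g x := by simpa using hp.sub_int_mul_eq (round x)
  rcases abs_choice (x - round x) with h | h <;> rw [h]
  · exact hshift
  · rw [hg, hshift]

end Function

lemma MonotoneOn.deriv_nonneg_of_differentiableAt {g : ℝ → ℝ} {s : Set ℝ} {x : ℝ}
    (hg : MonotoneOn g s) (hd : DifferentiableAt ℝ g x) (hs : UniqueDiffWithinAt ℝ s x) :
    0 ≤ deriv g x :=
  hd.derivWithin hs ▸ hg.derivWithin_nonneg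

lemma AntitoneOn.deriv_nonpos_of_differentiableAt {g : ℝ → ℝ} {s : Set ℝ} {x : ℝ}
    (hg : AntitoneOn g s) (hd : DifferentiableAt ℝ g x) (hs : UniqueDiffWithinAt ℝ s x) :
    deriv g x ≤ 0 :=
  hd.derivWithin hs ▸ hg.derivWithin_nonpos

/-- `F' = m ψ` changes sign at most once, from `-` to `+`; by the mean value theorem a positive
value of `F` would need `F' > 0` before it and `F' < 0` after it. -/
lemma nonpos_of_hasDerivAt_eq_mul_of_monotoneOn {F m ψ : ℝ → ℝ} {a b x : ℝ}
    (hF : ∀ y ∈ Icc a b, HasDerivAt F (m y * ψ y) y) (hm : MonotoneOn m (Icc a b))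
    (hψ : ∀ y ∈ Icc a b, 0 < ψ y) (ha : F a = 0) (hb : F b = 0) (hx : x ∈ Icc a b) :
    F x ≤ 0 := by
  by_contra! hpos
  have hax : a < x := hx.1.lt_of_ne (by rintro rfl; linarith)
  have hxb : x < b := hx.2.lt_of_ne (by rintro rfl; linarith)
  have hcont : ContinuousOn F (Icc a b) := fun y hy => (hF y hy).continuousAt.continuousWithinAt
  obtain ⟨c₁, hc₁, hslope₁⟩ := exists_hasDerivAt_eq_slope F (fun y => m y * ψ y) hax
    (hcont.mono (Icc_subset_Icc_right hx.2)) fun y hy => hF y ⟨hy.1.le, hy.2.le.trans hx.2⟩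
  obtain ⟨c₂, hc₂, hslope₂⟩ := exists_hasDerivAt_eq_slope F (fun y => m y * ψ y) hxb
    (hcont.mono (Icc_subset_Icc_left hx.1)) fun y hy => hF y ⟨hx.1.trans hy.1.le, hy.2.le⟩
  have hc₁' : c₁ ∈ Icc a b := ⟨hc₁.1.le, hc₁.2.le.trans hx.2⟩
  have hc₂' : c₂ ∈ Icc a b := ⟨hx.1.trans hc₂.1.le, hc₂.2.le⟩
  have hm₁ : 0 < m c₁ := by
    have : 0 < m c₁ * ψ c₁ := by
      rw [hslope₁, ha]
      exact div_pos (by linarith) (by linarith)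
    exact pos_of_mul_pos_left this (hψ c₁ hc₁').le
  have hm₂ : m c₂ < 0 := by
    have : m c₂ * ψ c₂ < 0 := by
      rw [hslope₂, hb]
      exact div_neg_of_neg_of_pos (by linarith) (by linarith)
    exact neg_of_mul_neg_left this (hψ c₂ hc₂').le
  linarith [hm hc₁' hc₂' (hc₁.2.trans hc₂.1).le]

lemma eq_zero_of_hasDerivAt_eq_mul_self {w a : ℝ → ℝ} (ha : Continuous a)
    (hw : ∀ x, HasDerivAt w (a x * w x) x) {x₀ : ℝ} (h₀ : w x₀ = 0) (x : ℝ) : w x = 0 := by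
  set A : ℝ → ℝ := fun y => ∫ t in x₀..y, a t
  have hA : ∀ y, HasDerivAt A (a y) y := fun y =>
    (ha.integral_hasStrictDerivAt x₀ y).hasDerivAt
  have hconst : ∀ y, HasDerivAt (fun y => w y * exp (-A y)) 0 y := fun y =>
    ((hw y).mul (hA y).neg.exp).congr_deriv (by ring)
  have h := is_const_of_deriv_eq_zero (fun y => (hconst y).differentiableAt)
    (fun y => (hconst y).deriv) x x₀
  simpa [A, h₀, exp_ne_zero] using h

section Eigenpair

variable {q lam k : ℝ} {r D ψ φ : ℝ → ℝ}

/-- Abel's identity: the zeroth-order coefficient cancels in `ψ L φ - φ L ψ`. -/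
lemma hasDerivAt_wronskian_of_Lop (hDpos : ∀ x, 0 < D x) (hψ : ContDiff ℝ 2 ψ)
    (hφ : ContDiff ℝ 2 φ) (hψeq : ∀ x, Lop q lam r D ψ x = k * ψ x)
    (hφeq : ∀ x, Lop q lam r D φ x = k * φ x) (x : ℝ) :
    HasDerivAt (fun y => ψ y * deriv φ y - deriv ψ y * φ y)
      (-(((1 + q) * deriv D x - 2 * lam * D x) / D x) *
        (ψ x * deriv φ x - deriv ψ x * φ x)) x := by
  have h := ((hψ.differentiable two_ne_zero x).hasDerivAt.mul
    (hφ.differentiable_deriv_two x).hasDerivAt).sub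
    ((hψ.differentiable_deriv_two x).hasDerivAt.mul (hφ.differentiable two_ne_zero x).hasDerivAt)
  refine h.congr_deriv ?_
  have hψx := hψeq x
  have hφx := hφeq x
  simp only [Lop] at hψx hφx
  field_simp [(hDpos x).ne']
  linear_combination ψ x * hφx - φ x * hψx

lemma IsEigenpair.exists_eq_const_mul (hDpos : ∀ x, 0 < D x) (hD : ContDiff ℝ 1 D)
    (hψ : IsEigenpair q lam r D k ψ) (hφ : ContDiff ℝ 2 φ) (hφper : Periodic φ 1)
    (hφeq : ∀ x, Lop q lam r D φ x = k * φ x) : ∃ c, ∀ x, φ x = c * ψ x := by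
  obtain ⟨hψ2, hψpos, hψper, hψeq⟩ := hψ
  set w : ℝ → ℝ := fun y => ψ y * deriv φ y - deriv ψ y * φ y
  have hρ : ∀ x, HasDerivAt (fun y => φ y / ψ y) (w x / ψ x ^ 2) x := fun x =>
    ((hφ.differentiable two_ne_zero x).hasDerivAt.div
      (hψ2.differentiable two_ne_zero x).hasDerivAt (hψpos x).ne').congr_deriv (by ring)
  have hρper : φ 0 / ψ 0 = φ 1 / ψ 1 := by
    rw [← zero_add (1 : ℝ), hφper, hψper]
  -- By Rolle the periodic ratio `φ / ψ` has a critical point, where the Wronskian vanishes; by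
  -- Abel's identity it then vanishes everywhere, so the ratio is constant.
  obtain ⟨x₀, -, hx₀⟩ := exists_hasDerivAt_eq_zero zero_lt_one
    (fun x _ => (hρ x).continuousAt.continuousWithinAt) hρper (fun x _ => hρ x)
  have ha : Continuous fun x => -(((1 + q) * deriv D x - 2 * lam * D x) / D x) :=
    (((continuous_const.mul (hD.continuous_deriv le_rfl)).sub
      (continuous_const.mul hD.continuous)).div hD.continuous fun x => (hDpos x).ne').neg
  have hw : ∀ x, w x = 0 := eq_zero_of_hasDerivAt_eq_mul_self ha
    (hasDerivAt_wronskian_of_Lop hDpos hψ2 hφ hψeq hφeq)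
    (by simpa [(hψpos x₀).ne'] using hx₀)
  refine ⟨φ 0 / ψ 0, fun x => ?_⟩
  have hconst := is_const_of_deriv_eq_zero (fun y => (hρ y).differentiableAt)
    (fun y => by rw [(hρ y).deriv, hw, zero_div]) x 0
  rw [← hconst, div_mul_cancel₀ _ (hψpos x).ne']

lemma IsEigenpair.comp_neg (hDeven : D.Even) (hreven : r.Even) (h : IsEigenpair q 0 r D k ψ) :
    IsEigenpair q 0 r D k (fun x => ψ (-x)) := by
  obtain ⟨hψ2, hψpos, hψper, hψeq⟩ := h
  have hd : deriv (fun x => ψ (-x)) = fun x => -deriv ψ (-x) :=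
    funext fun x => deriv_comp_neg ψ x
  have hdd : deriv (deriv fun x => ψ (-x)) = fun x => deriv (deriv ψ) (-x) := by
    rw [hd]
    funext x
    rw [deriv.fun_neg, deriv_comp_neg, neg_neg]
  refine ⟨hψ2.comp contDiff_neg, fun x => hψpos (-x), fun x => by
    simpa only [neg_add] using hψper.neg (-x), fun x => ?_⟩
  have hx := hψeq (-x)
  rw [Lop, hdd, hd]
  simp only [Lop, hDeven x, hDeven.deriv x, hDeven.deriv.deriv x, hreven x] at hx
  linear_combination hx

lemma IsEigenpair.even (hDpos : ∀ x, 0 < D x) (hD : ContDiff ℝ 1 D) (hDeven : D.Even)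
    (hreven : r.Even) (h : IsEigenpair q 0 r D k ψ) : ψ.Even := by
  obtain ⟨c, hc⟩ := h.exists_eq_const_mul hDpos hD (h.comp_neg hDeven hreven).1
    (h.comp_neg hDeven hreven).2.2.1 (h.comp_neg hDeven hreven).2.2.2
  have hc1 : c = 1 := by
    have h0 := hc 0
    rw [neg_zero] at h0
    exact (mul_eq_right₀ (h.2.1 0).ne').mp h0.symm
  exact fun x => by rw [hc x, hc1, one_mul]

end Eigenpair

section Flux

variable {q k : ℝ} {r D ψ : ℝ → ℝ}

/-- For `λ = 0` the operator is in divergence form: `L_q^0[r;D] ψ = (flux q D ψ)' + r ψ`. -/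
def flux (q : ℝ) (D ψ : ℝ → ℝ) (x : ℝ) : ℝ := D x * deriv ψ x + q * deriv D x * ψ x

lemma IsEigenpair.hasDerivAt_flux (hD : ContDiff ℝ 2 D) (h : IsEigenpair q 0 r D k ψ) (x : ℝ) :
    HasDerivAt (flux q D ψ) ((k - r x) * ψ x) x := by
  have hd := ((hD.differentiable two_ne_zero x).hasDerivAt.mul
    (h.1.differentiable_deriv_two x).hasDerivAt).add
    (((hD.differentiable_deriv_two x).hasDerivAt.const_mul q).mul
      (h.1.differentiable two_ne_zero x).hasDerivAt)
  refine hd.congr_deriv ?_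
  have hx := h.2.2.2 x
  simp only [Lop] at hx
  linear_combination hx

lemma continuous_flux (hD : ContDiff ℝ 1 D) (hψ : ContDiff ℝ 1 ψ) : Continuous (flux q D ψ) :=
  (hD.continuous.mul (hψ.continuous_deriv le_rfl)).add
    ((continuous_const.mul (hD.continuous_deriv le_rfl)).mul hψ.continuous)

lemma flux_odd (hDeven : D.Even) (hψeven : ψ.Even) : (flux q D ψ).Odd := fun x => by
  simp only [flux, hDeven x, hψeven x, hDeven.deriv x, hψeven.deriv x]
  ring

lemma flux_periodic (hDper : Periodic D 1) (hψper : Periodic ψ 1) : Periodic (flux q D ψ) 1 :=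
  fun x => by simp only [flux, hDper x, hψper x, hDper.deriv x, hψper.deriv x]

lemma IsEigenpair.flux_nonpos_of_antitoneOn (hD : ContDiff ℝ 2 D) (hDeven : D.Even)
    (hDper : Periodic D 1) (hψeven : ψ.Even) (h : IsEigenpair q 0 r D k ψ)
    (hr : AntitoneOn r (Icc 0 (1 / 2))) {x : ℝ} (hx : x ∈ Icc (0 : ℝ) (1 / 2)) :
    flux q D ψ x ≤ 0 :=
  nonpos_of_hasDerivAt_eq_mul_of_monotoneOn (fun y _ => h.hasDerivAt_flux hD y)
    (fun _ ha _ hb hab => sub_le_sub_left (hr ha hb hab) k) (fun y _ => h.2.1 y)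
    (flux_odd hDeven hψeven).map_zero
    ((flux_odd hDeven hψeven).map_half_eq_zero (flux_periodic hDper h.2.2.1)) hx

lemma IsEigenpair.flux_nonneg_of_monotoneOn (hD : ContDiff ℝ 2 D) (hDeven : D.Even)
    (hDper : Periodic D 1) (hψeven : ψ.Even) (h : IsEigenpair q 0 r D k ψ)
    (hr : MonotoneOn r (Icc 0 (1 / 2))) {x : ℝ} (hx : x ∈ Icc (0 : ℝ) (1 / 2)) :
    0 ≤ flux q D ψ x := by
  have hodd := flux_odd (q := q) hDeven hψeven
  have h' := nonpos_of_hasDerivAt_eq_mul_of_monotoneOn (F := -flux q D ψ)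
    (m := fun y => r y - k)
    (fun y _ => (h.hasDerivAt_flux hD y).neg.congr_deriv (by ring))
    (fun _ ha _ hb hab => sub_le_sub_right (hr ha hb hab) k) (fun y _ => h.2.1 y)
    (by rw [Pi.neg_apply, hodd.map_zero, neg_zero])
    (by rw [Pi.neg_apply, hodd.map_half_eq_zero (flux_periodic hDper h.2.2.1), neg_zero]) hx
  simpa using h'

lemma IsEigenpair.exists_mem_Icc_deriv_mul_flux_eq (hD : ContDiff ℝ 1 D) (hDpos : ∀ x, 0 < D x)
    (hDper : Periodic D 1) (hDeven : D.Even) (hreven : r.Even) (h : IsEigenpair q 0 r D k ψ)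
    (x : ℝ) : ∃ y ∈ Icc (0 : ℝ) (1 / 2), deriv D y * flux q D ψ y = deriv D x * flux q D ψ x :=
  (hDeven.deriv.mul_odd (flux_odd hDeven (h.even hDpos hD hDeven hreven))).exists_mem_Icc_eq
    (hDper.deriv.mul (flux_periodic hDper h.2.2.1)) x

end Flux

section Comparison

variable {q₁ q₂ k₁ k₂ : ℝ} {r D ψ₁ ψ₂ : ℝ → ℝ}

/-- The exponent `(q₁ + q₂) / 2` of the weight is what makes the terms in `ψ₁' ψ₂` and `ψ₁ ψ₂'`
recombine into the fluxes. -/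
lemma hasDerivAt_weighted_flux_cross (hD : ContDiff ℝ 2 D) (hDpos : ∀ x, 0 < D x)
    (h₁ : IsEigenpair q₁ 0 r D k₁ ψ₁) (h₂ : IsEigenpair q₂ 0 r D k₂ ψ₂) (x : ℝ) :
    HasDerivAt
      (fun y => D y ^ ((q₁ + q₂) / 2) * (flux q₁ D ψ₁ y * ψ₂ y - flux q₂ D ψ₂ y * ψ₁ y))
      ((k₁ - k₂) * (D x ^ ((q₁ + q₂) / 2) * (ψ₁ x * ψ₂ x)) -
        (q₂ - q₁) / 2 * (D x ^ ((q₁ + q₂) / 2 - 1) *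
          (deriv D x * flux q₁ D ψ₁ x * ψ₂ x + deriv D x * flux q₂ D ψ₂ x * ψ₁ x))) x := by
  have hweight := (hD.differentiable two_ne_zero x).hasDerivAt.rpow_const
    (p := (q₁ + q₂) / 2) (Or.inl (hDpos x).ne')
  have h := hweight.mul (((h₁.hasDerivAt_flux hD x).mul
    (h₂.1.differentiable two_ne_zero x).hasDerivAt).sub
    ((h₂.hasDerivAt_flux hD x).mul (h₁.1.differentiable two_ne_zero x).hasDerivAt))
  refine h.congr_deriv ?_
  have hDx := (hDpos x).ne'
  rw [rpow_sub_one hDx]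
  simp only [flux, Pi.mul_apply, Pi.sub_apply]
  field_simp
  ring

lemma exists_pos_eigenvalue_sub_mul_eq (hD : ContDiff ℝ 2 D) (hDpos : ∀ x, 0 < D x)
    (hDper : Periodic D 1) (h₁ : IsEigenpair q₁ 0 r D k₁ ψ₁)
    (h₂ : IsEigenpair q₂ 0 r D k₂ ψ₂) :
    ∃ I > 0, (k₁ - k₂) * I = (q₂ - q₁) / 2 * ∫ x in (0 : ℝ)..1, D x ^ ((q₁ + q₂) / 2 - 1) *
      (deriv D x * flux q₁ D ψ₁ x * ψ₂ x + deriv D x * flux q₂ D ψ₂ x * ψ₁ x) := by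
  have hDc := hD.continuous
  have hD'c := hD.continuous_deriv one_le_two
  have hψ₁c := h₁.1.continuous
  have hψ₂c := h₂.1.continuous
  have hF₁c := continuous_flux (q := q₁) (hD.of_le one_le_two) (h₁.1.of_le one_le_two)
  have hF₂c := continuous_flux (q := q₂) (hD.of_le one_le_two) (h₂.1.of_le one_le_two)
  have hw : ∀ p : ℝ, Continuous fun x => D x ^ p := fun p =>
    hDc.rpow_const fun x => Or.inl (hDpos x).ne'
  have hw₁ := hw ((q₁ + q₂) / 2)
  have hw₂ := hw ((q₁ + q₂) / 2 - 1)
  have hperiod := intervalIntegral.integral_eq_sub_of_hasDerivAt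
    (fun x _ => hasDerivAt_weighted_flux_cross hD hDpos h₁ h₂ x)
    (Continuous.intervalIntegrable (by fun_prop) 0 1)
  rw [← zero_add (1 : ℝ), hDper, flux_periodic hDper h₁.2.2.1, flux_periodic hDper h₂.2.2.1,
    h₁.2.2.1, h₂.2.2.1, sub_self, intervalIntegral.integral_sub
      (Continuous.intervalIntegrable (by fun_prop) _ _)
      (Continuous.intervalIntegrable (by fun_prop) _ _),
    intervalIntegral.integral_const_mul, intervalIntegral.integral_const_mul,
    zero_add] at hperiod
  refine ⟨∫ x in (0 : ℝ)..1, D x ^ ((q₁ + q₂) / 2) * (ψ₁ x * ψ₂ x),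
    intervalIntegral.intervalIntegral_pos_of_pos_on
      (Continuous.intervalIntegrable (by fun_prop) 0 1)
      (fun x _ => mul_pos (rpow_pos_of_pos (hDpos x) _) (mul_pos (h₁.2.1 x) (h₂.2.1 x)))
      zero_lt_one, by linarith⟩

end Comparison

section Monotonicity

variable {r D : ℝ → ℝ} {k : ℝ → ℝ} {ψ : ℝ → ℝ → ℝ}

lemma antitone_of_deriv_mul_flux_nonneg (hD : ContDiff ℝ 2 D) (hDpos : ∀ x, 0 < D x)
    (hDper : Periodic D 1) (hDeven : D.Even) (hreven : r.Even)
    (hk : ∀ q, IsEigenpair q 0 r D (k q) (ψ q))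
    (hsign : ∀ q, ∀ x ∈ Icc (0 : ℝ) (1 / 2), 0 ≤ deriv D x * flux q D (ψ q) x) : Antitone k := by
  have hsign' : ∀ q x, 0 ≤ deriv D x * flux q D (ψ q) x := fun q x => by
    obtain ⟨y, hy, hyx⟩ :=
      (hk q).exists_mem_Icc_deriv_mul_flux_eq (hD.of_le one_le_two) hDpos hDper hDeven hreven x
    exact hyx ▸ hsign q y hy
  intro q₁ q₂ hq
  obtain ⟨I, hI, heq⟩ := exists_pos_eigenvalue_sub_mul_eq hD hDpos hDper (hk q₁) (hk q₂)
  have hJ := intervalIntegral.integral_nonneg (μ := volume) zero_le_one fun x _ =>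
    mul_nonneg (rpow_pos_of_pos (hDpos x) ((q₁ + q₂) / 2 - 1)).le
      (add_nonneg (mul_nonneg (hsign' q₁ x) ((hk q₂).2.1 x).le)
        (mul_nonneg (hsign' q₂ x) ((hk q₁).2.1 x).le))
  have := mul_nonneg (div_nonneg (sub_nonneg.mpr hq) zero_le_two) hJ
  rw [← heq] at this
  exact sub_nonneg.mp (nonneg_of_mul_nonneg_left this hI)

lemma monotone_of_deriv_mul_flux_nonpos (hD : ContDiff ℝ 2 D) (hDpos : ∀ x, 0 < D x)
    (hDper : Periodic D 1) (hDeven : D.Even) (hreven : r.Even)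
    (hk : ∀ q, IsEigenpair q 0 r D (k q) (ψ q))
    (hsign : ∀ q, ∀ x ∈ Icc (0 : ℝ) (1 / 2), deriv D x * flux q D (ψ q) x ≤ 0) : Monotone k := by
  have hsign' : ∀ q x, deriv D x * flux q D (ψ q) x ≤ 0 := fun q x => by
    obtain ⟨y, hy, hyx⟩ :=
      (hk q).exists_mem_Icc_deriv_mul_flux_eq (hD.of_le one_le_two) hDpos hDper hDeven hreven x
    exact hyx ▸ hsign q y hy
  intro q₁ q₂ hq
  obtain ⟨I, hI, heq⟩ := exists_pos_eigenvalue_sub_mul_eq hD hDpos hDper (hk q₁) (hk q₂)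
  have hJ := intervalIntegral.integral_nonneg (μ := volume) zero_le_one fun x _ =>
    neg_nonneg.mpr <|
    mul_nonpos_of_nonneg_of_nonpos (rpow_pos_of_pos (hDpos x) ((q₁ + q₂) / 2 - 1)).le
      (add_nonpos (mul_nonpos_of_nonpos_of_nonneg (hsign' q₁ x) ((hk q₂).2.1 x).le)
        (mul_nonpos_of_nonpos_of_nonneg (hsign' q₂ x) ((hk q₁).2.1 x).le))
  rw [intervalIntegral.integral_neg, neg_nonneg] at hJ
  have := mul_nonpos_of_nonneg_of_nonpos (div_nonneg (sub_nonneg.mpr hq) zero_le_two) hJ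
  rw [← heq] at this
  exact sub_nonpos.mp (nonpos_of_mul_nonpos_left this hI)

end Monotonicity

theorem stmt_16_general (D r : ℝ → ℝ) (hD : ContDiff ℝ 3 D)
    (hDpos : ∀ x, 0 < D x) (hDper : Function.Periodic D 1)
    (hDeven : ∀ x, D (-x) = D x) (hreven : ∀ x, r (-x) = r x)
    (k : ℝ → ℝ) (ψ : ℝ → ℝ → ℝ)
    (hk : ∀ q : ℝ, IsEigenpair q 0 r D (k q) (ψ q)) :
    ((MonotoneOn D (Set.Icc 0 (1 / 2)) ∧ MonotoneOn r (Set.Icc 0 (1 / 2))) ∨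
        (AntitoneOn D (Set.Icc 0 (1 / 2)) ∧ AntitoneOn r (Set.Icc 0 (1 / 2))) →
      Antitone k) ∧
    ((MonotoneOn D (Set.Icc 0 (1 / 2)) ∧ AntitoneOn r (Set.Icc 0 (1 / 2))) ∨
        (AntitoneOn D (Set.Icc 0 (1 / 2)) ∧ MonotoneOn r (Set.Icc 0 (1 / 2))) →
      Monotone k) := by
  have hD2 : ContDiff ℝ 2 D := hD.of_le (by norm_num)
  have hψeven : ∀ q, (ψ q).Even := fun q =>
    (hk q).even hDpos (hD2.of_le one_le_two) hDeven hreven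
  have hDd : ∀ x, DifferentiableAt ℝ D x := hD2.differentiable two_ne_zero
  have hIcc := uniqueDiffOn_Icc (show (0 : ℝ) < 1 / 2 by norm_num)
  refine ⟨fun hsame => antitone_of_deriv_mul_flux_nonneg hD2 hDpos hDper hDeven hreven hk
      fun q x hx => ?_,
    fun hopposite => monotone_of_deriv_mul_flux_nonpos hD2 hDpos hDper hDeven hreven hk
      fun q x hx => ?_⟩
  · rcases hsame with ⟨hDm, hrm⟩ | ⟨hDa, hra⟩
    · exact mul_nonneg (hDm.deriv_nonneg_of_differentiableAt (hDd x) (hIcc x hx))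
        ((hk q).flux_nonneg_of_monotoneOn hD2 hDeven hDper (hψeven q) hrm hx)
    · exact mul_nonneg_of_nonpos_of_nonpos
        (hDa.deriv_nonpos_of_differentiableAt (hDd x) (hIcc x hx))
        ((hk q).flux_nonpos_of_antitoneOn hD2 hDeven hDper (hψeven q) hra hx)
  · rcases hopposite with ⟨hDm, hra⟩ | ⟨hDa, hrm⟩
    · exact mul_nonpos_of_nonneg_of_nonpos
        (hDm.deriv_nonneg_of_differentiableAt (hDd x) (hIcc x hx))
        ((hk q).flux_nonpos_of_antitoneOn hD2 hDeven hDper (hψeven q) hra hx)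
    · exact mul_nonpos_of_nonpos_of_nonneg
        (hDa.deriv_nonpos_of_differentiableAt (hDd x) (hIcc x hx))
        ((hk q).flux_nonneg_of_monotoneOn hD2 hDeven hDper (hψeven q) hrm hx)

/-- Theorem `monotonicity (ii)`. Under symmetry, regularity and
monotonicity assumptions on `D` and `r`, the map `q ↦ k_q^0[r;D]` is monotonic:
nonincreasing if `D` and `r` have the same monotonicity on `[0,1/2]`, nondecreasing if
they have opposite monotonicity. -/
theorem stmt_16 (D r : ℝ → ℝ) (hD : ContDiff ℝ 3 D) (hr : ContDiff ℝ 4 r)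
    (hDpos : ∀ x, 0 < D x) (hDper : Function.Periodic D 1)
    (hrper : Function.Periodic r 1)
    (hDeven : ∀ x, D (-x) = D x) (hreven : ∀ x, r (-x) = r x)
    (hDmono : MonotoneOn D (Set.Icc 0 (1 / 2)) ∨ AntitoneOn D (Set.Icc 0 (1 / 2)))
    (hrmono : MonotoneOn r (Set.Icc 0 (1 / 2)) ∨ AntitoneOn r (Set.Icc 0 (1 / 2)))
    (hr' : ∀ x ∈ Set.Ioo (0 : ℝ) (1 / 2), deriv r x ≠ 0)
    (hr''0 : deriv (deriv r) 0 ≠ 0) (hr''h : deriv (deriv r) (1 / 2) ≠ 0)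
    (k : ℝ → ℝ) (ψ : ℝ → ℝ → ℝ)
    (hk : ∀ q : ℝ, IsEigenpair q 0 r D (k q) (ψ q)) :
    ((MonotoneOn D (Set.Icc 0 (1 / 2)) ∧ MonotoneOn r (Set.Icc 0 (1 / 2))) ∨
        (AntitoneOn D (Set.Icc 0 (1 / 2)) ∧ AntitoneOn r (Set.Icc 0 (1 / 2))) →
      Antitone k) ∧
    ((MonotoneOn D (Set.Icc 0 (1 / 2)) ∧ AntitoneOn r (Set.Icc 0 (1 / 2))) ∨
        (AntitoneOn D (Set.Icc 0 (1 / 2)) ∧ MonotoneOn r (Set.Icc 0 (1 / 2))) →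
      Monotone k) :=
  stmt_16_general D r hD hDpos hDper hDeven hreven k ψ hk
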